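/- Let E ⊆ ℂ^4⊗ℂ^4⊗ℂ^4 be the linear span of the five tensors x^1_2⊗y^2_1⊗z^2_2, x^1_2⊗y^2_2⊗z^2_2, x^2_1⊗y^2_1⊗z^1_2, x^2_1⊗y^2_1⊗z^2_2, and T_{BCLR}. Then E is 5-dimensional, and a nonzero simple tensor a⊗b⊗c (with a,b,c ∈ ℂ^4) lies in E if and only if it has one of the following three forms: (i) x^1_2⊗(λ y^2_1 + μ y^2_2)⊗z^2_2 for some scalars λ, μ (a point of the β-line), (ii) x^2_1⊗y^2_1⊗(λ z^1_2 + μ z^2_2) for some scalars λ, μ (a point of the γ-line), or (iii) (λ x^1_2 + μ x^2_1)⊗y^2_1⊗z^2_2 for some scalars λ, μ (a point of the α-line). In particular, the set of rank-one points of E is the union of exactly three lines on the Segre variety, the α-line being the unique line on the Segre intersecting both of the other two. -/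

import Mathlib

/-- A simple (rank-one) tensor in coordinates: `(u ⊗ v ⊗ w)_{ijk} = u_i v_j w_k`. -/
def simpleTensor {ι₁ ι₂ ι₃ : Type} (u : ι₁ → ℂ) (v : ι₂ → ℂ) (w : ι₃ → ℂ) :
    ι₁ → ι₂ → ι₃ → ℂ :=
  fun i j k => u i * v j * w k

/-- The set of tensors of rank at most `r`: sums of `r` simple tensors. -/
def rankAtMost (ι₁ ι₂ ι₃ : Type) (r : ℕ) : Set (ι₁ → ι₂ → ι₃ → ℂ) :=
  {T | ∃ u : Fin r → ι₁ → ℂ, ∃ v : Fin r → ι₂ → ℂ, ∃ w : Fin r → ι₃ → ℂ,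
    T = ∑ s : Fin r, simpleTensor (u s) (v s) (w s)}

/-- The border rank of a tensor: the least `r` such that `T` lies in the closure of the
set of tensors of rank at most `r`. -/
noncomputable def borderRank {ι₁ ι₂ ι₃ : Type} (T : ι₁ → ι₂ → ι₃ → ℂ) : ℕ :=
  sInf {r : ℕ | T ∈ closure (rankAtMost ι₁ ι₂ ι₃ r)}

/-- The matrix multiplication tensor `M_{⟨n,m,p⟩} = ∑ x^i_j ⊗ y^j_k ⊗ z^k_i`
in coordinates: the first factor is indexed by pairs `(i,j)`, the second by `(j,k)`,
the third by `(k,i)`. -/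
def matMulTensor (n m p : ℕ) :
    (Fin n × Fin m) → (Fin m × Fin p) → (Fin p × Fin n) → ℂ :=
  fun x y z => if x.2 = y.1 ∧ y.2 = z.1 ∧ z.2 = x.1 then 1 else 0

/-- The BCLRS tensor `T_{BCLRS,m} = M_{⟨m,2,2⟩} − x^1_1 ⊗ (y^1_1 ⊗ z^1_1 + y^1_2 ⊗ z^2_1)`
(indices written 1-based in the literature, 0-based here). -/
def TBCLRS (m : ℕ) : (Fin m × Fin 2) → (Fin 2 × Fin 2) → (Fin 2 × Fin m) → ℂ :=
  fun x y z =>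
    matMulTensor m 2 2 x y z -
      (if x.1.val = 0 ∧ x.2.val = 0 then 1 else 0) *
        ((if y.1.val = 0 ∧ y.2.val = 0 then 1 else 0) *
            (if z.1.val = 0 ∧ z.2.val = 0 then 1 else 0) +
          (if y.1.val = 0 ∧ y.2.val = 1 then 1 else 0) *
            (if z.1.val = 1 ∧ z.2.val = 0 then 1 else 0))

/-- The standard basis vector `e_{(i,j)}` of a coordinate space indexed by pairs. -/
def unitVec {α β : Type} [DecidableEq α] [DecidableEq β] (i : α) (j : β) : α × β → ℂ :=
  fun p => if p = (i, j) then 1 else 0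

/-- The 5-plane `E^{BCLR}`: the span of `x^1_2⊗y^2_1⊗z^2_2`, `x^1_2⊗y^2_2⊗z^2_2`,
`x^2_1⊗y^2_1⊗z^1_2`, `x^2_1⊗y^2_1⊗z^2_2` and `T_{BCLR}` (indices 0-based:
`x^i_j = unitVec (i-1) (j-1)`, `y^j_k = unitVec (j-1) (k-1)`, `z^k_i = unitVec (k-1) (i-1)`). -/
noncomputable def EBCLR :
    Submodule ℂ ((Fin 2 × Fin 2) → (Fin 2 × Fin 2) → (Fin 2 × Fin 2) → ℂ) :=
  Submodule.span ℂ
    { simpleTensor (unitVec 0 1) (unitVec 1 0) (unitVec 1 1),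
      simpleTensor (unitVec 0 1) (unitVec 1 1) (unitVec 1 1),
      simpleTensor (unitVec 1 0) (unitVec 1 0) (unitVec 0 1),
      simpleTensor (unitVec 1 0) (unitVec 1 0) (unitVec 1 1),
      TBCLRS 2 }

/-!
A simple tensor has vanishing `2 × 2` minors in its first flattening. Writing an element of
`E^{BCLR}` as `∑ kᵢ gᵢ` in the five generators, four such minors give
`k₄² = k₁k₃ = k₀k₂ = k₁k₂ = 0`, and the surviving supports `{0,1}`, `{2,3}`, `{0,3}` are, by
trilinearity of `⊗`, exactly the β-, γ- and α-lines.
-/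

section SimpleTensor

variable {ι₁ ι₂ ι₃ : Type}

theorem simpleTensor_smul_add_smul_left (l m : ℂ) (u u' : ι₁ → ℂ) (v : ι₂ → ℂ) (w : ι₃ → ℂ) :
    simpleTensor (l • u + m • u') v w = l • simpleTensor u v w + m • simpleTensor u' v w := by
  funext i j k
  simp only [simpleTensor, Pi.add_apply, Pi.smul_apply, smul_eq_mul]
  ring

theorem simpleTensor_smul_add_smul_mid (l m : ℂ) (u : ι₁ → ℂ) (v v' : ι₂ → ℂ) (w : ι₃ → ℂ) :
    simpleTensor u (l • v + m • v') w = l • simpleTensor u v w + m • simpleTensor u v' w := by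
  funext i j k
  simp only [simpleTensor, Pi.add_apply, Pi.smul_apply, smul_eq_mul]
  ring

theorem simpleTensor_smul_add_smul_right (l m : ℂ) (u : ι₁ → ℂ) (v : ι₂ → ℂ) (w w' : ι₃ → ℂ) :
    simpleTensor u v (l • w + m • w') = l • simpleTensor u v w + m • simpleTensor u v w' := by
  funext i j k
  simp only [simpleTensor, Pi.add_apply, Pi.smul_apply, smul_eq_mul]
  ring

theorem simpleTensor_mul_swap_left (u : ι₁ → ℂ) (v : ι₂ → ℂ) (w : ι₃ → ℂ)
    (i i' : ι₁) (j j' : ι₂) (k k' : ι₃) :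
    simpleTensor u v w i j k * simpleTensor u v w i' j' k' =
      simpleTensor u v w i' j k * simpleTensor u v w i j' k' := by
  simp only [simpleTensor]
  ring

end SimpleTensor

def bclrGen : Fin 5 → (Fin 2 × Fin 2) → (Fin 2 × Fin 2) → (Fin 2 × Fin 2) → ℂ :=
  ![simpleTensor (unitVec 0 1) (unitVec 1 0) (unitVec 1 1),
    simpleTensor (unitVec 0 1) (unitVec 1 1) (unitVec 1 1),
    simpleTensor (unitVec 1 0) (unitVec 1 0) (unitVec 0 1),
    simpleTensor (unitVec 1 0) (unitVec 1 0) (unitVec 1 1),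
    TBCLRS 2]

theorem EBCLR_eq_span_range_bclrGen : EBCLR = Submodule.span ℂ (Set.range bclrGen) := by
  simp only [EBCLR, bclrGen, Matrix.range_cons, Matrix.range_empty, Set.union_empty,
    Set.singleton_union]

theorem mem_EBCLR_iff {T : (Fin 2 × Fin 2) → (Fin 2 × Fin 2) → (Fin 2 × Fin 2) → ℂ} :
    T ∈ EBCLR ↔ ∃ k : Fin 5 → ℂ, ∑ i, k i • bclrGen i = T := by
  rw [EBCLR_eq_span_range_bclrGen, Submodule.mem_span_range_iff_exists_fun]

theorem bclrGen_mem_EBCLR (i : Fin 5) : bclrGen i ∈ EBCLR :=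
  EBCLR_eq_span_range_bclrGen ▸ Submodule.subset_span (Set.mem_range_self i)

theorem smul_add_smul_bclrGen_mem_EBCLR (l m : ℂ) (i j : Fin 5) :
    l • bclrGen i + m • bclrGen j ∈ EBCLR :=
  add_mem (Submodule.smul_mem _ l (bclrGen_mem_EBCLR i))
    (Submodule.smul_mem _ m (bclrGen_mem_EBCLR j))

section Coordinates

attribute [local simp] Fin.sum_univ_five bclrGen simpleTensor unitVec TBCLRS matMulTensor

theorem linearIndependent_bclrGen : LinearIndependent ℂ bclrGen := by
  rw [Fintype.linearIndependent_iff]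
  intro k hk i
  have entry x y z : (∑ i, k i • bclrGen i) x y z = 0 := by rw [hk]; rfl
  fin_cases i
  · simpa using entry (0,1) (1,0) (1,1)
  · simpa using entry (0,1) (1,1) (1,1)
  · simpa using entry (1,0) (1,0) (0,1)
  · simpa using entry (1,0) (1,0) (1,1)
  · simpa using entry (0,1) (1,0) (0,0)

theorem coeff_eq_zero_of_sum_bclrGen_eq_simpleTensor {a b c : Fin 2 × Fin 2 → ℂ}
    {k : Fin 5 → ℂ} (h : ∑ i, k i • bclrGen i = simpleTensor a b c) :
    k 4 = 0 ∧ (k 2 = 0 ∧ k 3 = 0 ∨ k 0 = 0 ∧ k 1 = 0 ∨ k 1 = 0 ∧ k 2 = 0) := by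
  have minor i i' j j' l l' := h ▸ simpleTensor_mul_swap_left a b c i i' j j' l l'
  have h44 : k 4 * k 4 = 0 := by simpa using minor (0,1) (1,0) (1,0) (0,1) (0,0) (1,1)
  have h13 : k 1 * k 3 = 0 := by simpa using minor (0,1) (1,0) (1,1) (1,0) (1,1) (1,1)
  have h20 : k 2 * k 0 = 0 := by simpa using minor (1,0) (0,1) (1,0) (1,0) (0,1) (1,1)
  have h12 : k 1 * k 2 = 0 := by simpa using minor (0,1) (1,0) (1,1) (1,0) (1,1) (0,1)
  refine ⟨mul_self_eq_zero.1 h44, ?_⟩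
  by_cases h1 : k 1 = 0
  · by_cases h2 : k 2 = 0
    · exact Or.inr (Or.inr ⟨h1, h2⟩)
    · exact Or.inr (Or.inl ⟨(mul_eq_zero.1 h20).resolve_left h2, h1⟩)
  · exact Or.inl ⟨(mul_eq_zero.1 h12).resolve_left h1, (mul_eq_zero.1 h13).resolve_left h1⟩

end Coordinates

theorem finrank_EBCLR : Module.finrank ℂ EBCLR = 5 := by
  rw [EBCLR_eq_span_range_bclrGen, finrank_span_eq_card linearIndependent_bclrGen,
    Fintype.card_fin]

theorem EBCLR_rank_one_points :
    Module.finrank ℂ EBCLR = 5 ∧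
    ∀ a b c : Fin 2 × Fin 2 → ℂ, simpleTensor a b c ≠ 0 →
      (simpleTensor a b c ∈ EBCLR ↔
        (∃ lam mu : ℂ, simpleTensor a b c =
          simpleTensor (unitVec 0 1) (lam • unitVec 1 0 + mu • unitVec 1 1) (unitVec 1 1)) ∨
        (∃ lam mu : ℂ, simpleTensor a b c =
          simpleTensor (unitVec 1 0) (unitVec 1 0) (lam • unitVec 0 1 + mu • unitVec 1 1)) ∨
        (∃ lam mu : ℂ, simpleTensor a b c =
          simpleTensor (lam • unitVec 0 1 + mu • unitVec 1 0) (unitVec 1 0) (unitVec 1 1))) := by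
  refine ⟨finrank_EBCLR, fun a b c _ => ⟨fun hmem => ?_, ?_⟩⟩
  · obtain ⟨k, hk⟩ := mem_EBCLR_iff.1 hmem
    obtain ⟨h4, ⟨h2, h3⟩ | ⟨h0, h1⟩ | ⟨h1, h2⟩⟩ :=
      coeff_eq_zero_of_sum_bclrGen_eq_simpleTensor hk
    · refine Or.inl ⟨k 0, k 1, ?_⟩
      rw [← hk, simpleTensor_smul_add_smul_mid]
      simp [Fin.sum_univ_five, bclrGen, h2, h3, h4]
    · refine Or.inr (Or.inl ⟨k 2, k 3, ?_⟩)
      rw [← hk, simpleTensor_smul_add_smul_right]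
      simp [Fin.sum_univ_five, bclrGen, h0, h1, h4]
    · refine Or.inr (Or.inr ⟨k 0, k 3, ?_⟩)
      rw [← hk, simpleTensor_smul_add_smul_left]
      simp [Fin.sum_univ_five, bclrGen, h1, h2, h4]
  · rintro (⟨l, m, h⟩ | ⟨l, m, h⟩ | ⟨l, m, h⟩)
    · rw [h, simpleTensor_smul_add_smul_mid]
      exact smul_add_smul_bclrGen_mem_EBCLR l m 0 1
    · rw [h, simpleTensor_smul_add_smul_right]
      exact smul_add_smul_bclrGen_mem_EBCLR l m 2 3
    · rw [h, simpleTensor_smul_add_smul_left]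
      exact smul_add_smul_bclrGen_mem_EBCLR l m 0 3
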